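/- Combined Löwenheim–Skolem for many-sorted logic: Let Σ be a many-sorted signature, 𝔸 a Σ-structure, and κ a cardinal with κ ≥ max(|Σ|, ℵ₀). Then there is a Σ-structure 𝔹 elementarily equivalent to 𝔸 such that |σ^𝔹| = κ for every sort σ with σ^𝔸 infinite and σ^𝔹 = σ^𝔸 for every sort σ with σ^𝔸 finite. -/

import Mathlib

set_option autoImplicit false

/-- A many-sorted first-order signature. -/
structure MSSignature : Type 1 where
  Sorts : Type
  Func : Type
  Pred : Type
  funcDom : Func → List Sorts
  funcCod : Func → Sorts
  predDom : Pred → List Sorts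

namespace MS

variable (Sg : MSSignature)

/-- Many-sorted terms; variables of each sort are indexed by naturals. -/
inductive Term : Sg.Sorts → Type where
  | var (s : Sg.Sorts) (n : ℕ) : Term s
  | app (f : Sg.Func)
      (args : ∀ i : Fin (Sg.funcDom f).length, Term ((Sg.funcDom f).get i)) :
      Term (Sg.funcCod f)

/-- Many-sorted first-order formulas. -/
inductive Formula : Type where
  | eq {s : Sg.Sorts} (t u : Term Sg s) : Formula
  | pred (P : Sg.Pred)
      (args : ∀ i : Fin (Sg.predDom P).length, Term Sg ((Sg.predDom P).get i)) : Formula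
  | falsum : Formula
  | imp (φ ψ : Formula) : Formula
  | all (s : Sg.Sorts) (n : ℕ) (φ : Formula) : Formula

/-- A structure for a many-sorted signature: each sort gets a nonempty domain. -/
structure Structure : Type 1 where
  dom : Sg.Sorts → Type
  dom_nonempty : ∀ s, Nonempty (dom s)
  interpFunc : ∀ f : Sg.Func,
    (∀ i : Fin (Sg.funcDom f).length, dom ((Sg.funcDom f).get i)) → dom (Sg.funcCod f)
  interpPred : ∀ P : Sg.Pred,
    (∀ i : Fin (Sg.predDom P).length, dom ((Sg.predDom P).get i)) → Prop

variable {Sg}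

/-- Variable assignments. -/
def Assign (A : Structure Sg) : Type := ∀ s : Sg.Sorts, ℕ → A.dom s

open Classical in
noncomputable
def Assign.update {A : Structure Sg} (ν : Assign A) (s : Sg.Sorts) (n : ℕ) (a : A.dom s) :
    Assign A := fun t m =>
  if h : s = t then (if m = n then h ▸ a else ν t m) else ν t m

def Term.eval {A : Structure Sg} (ν : Assign A) : ∀ {s : Sg.Sorts}, Term Sg s → A.dom s
  | _, .var s n => ν s n
  | _, .app f args => A.interpFunc f fun i => Term.eval ν (args i)

/-- Tarskian satisfaction. -/
def Sat (A : Structure Sg) (ν : Assign A) : Formula Sg → Prop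
  | .eq t u => t.eval ν = u.eval ν
  | .pred P args => A.interpPred P fun i => (args i).eval ν
  | .falsum => False
  | .imp φ ψ => Sat A ν φ → Sat A ν ψ
  | .all s n φ => ∀ a : A.dom s, Sat A (ν.update s n a) φ

/-- Derived connectives. -/
def Formula.not (φ : Formula Sg) : Formula Sg := .imp φ .falsum
def Formula.and (φ ψ : Formula Sg) : Formula Sg := (Formula.imp φ ψ.not).not
def Formula.or (φ ψ : Formula Sg) : Formula Sg := .imp φ.not ψ
def Formula.ex (s : Sg.Sorts) (n : ℕ) (φ : Formula Sg) : Formula Sg :=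
  ((Formula.all s n φ.not)).not
def Formula.andList : List (Formula Sg) → Formula Sg :=
  List.foldr Formula.and (Formula.not .falsum)
def Formula.orList : List (Formula Sg) → Formula Sg :=
  List.foldr Formula.or .falsum

/-- Occurrence of variable `(s, n)` in a term. -/
def Term.varOccurs (s : Sg.Sorts) (n : ℕ) : ∀ {t : Sg.Sorts}, Term Sg t → Prop
  | _, .var s' n' => s = s' ∧ n = n'
  | _, .app _ args => ∃ i, Term.varOccurs s n (args i)

/-- Free occurrence of variable `(s, n)` in a formula. -/
def Formula.varFree (s : Sg.Sorts) (n : ℕ) : Formula Sg → Prop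
  | .eq t u => t.varOccurs s n ∨ u.varOccurs s n
  | .pred _ args => ∃ i, (args i).varOccurs s n
  | .falsum => False
  | .imp φ ψ => φ.varFree s n ∨ ψ.varFree s n
  | .all s' n' φ => φ.varFree s n ∧ ¬(s = s' ∧ n = n')

def Formula.IsSentence (φ : Formula Sg) : Prop := ∀ s n, ¬ φ.varFree s n

/-- Quantifier-free formulas. -/
def Formula.IsQF : Formula Sg → Prop
  | .eq _ _ => True
  | .pred _ _ => True
  | .falsum => True
  | .imp φ ψ => φ.IsQF ∧ ψ.IsQF
  | .all _ _ _ => False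

/-- A structure is a model of a set of formulas (a theory) if it satisfies
every axiom under every assignment. -/
def Models (A : Structure Sg) (T : Set (Formula Sg)) : Prop :=
  ∀ φ ∈ T, ∀ ν : Assign A, Sat A ν φ

/-- Elementary equivalence: same sentences hold. -/
def ElemEquiv (A B : Structure Sg) : Prop :=
  ∀ φ : Formula Sg, φ.IsSentence →
    ((∀ ν : Assign A, Sat A ν φ) ↔ (∀ ν : Assign B, Sat B ν φ))

/-- Substructures: sort-wise subsets closed under the functions. -/
structure Substructure (A : Structure Sg) : Type 1 where
  carrier : ∀ s : Sg.Sorts, Set (A.dom s)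
  carrier_nonempty : ∀ s, (carrier s).Nonempty
  closed : ∀ (f : Sg.Func)
    (args : ∀ i : Fin (Sg.funcDom f).length, A.dom ((Sg.funcDom f).get i)),
    (∀ i, args i ∈ carrier _) → A.interpFunc f args ∈ carrier _

/-- The induced structure on a substructure. -/
def Substructure.toStructure {A : Structure Sg} (B : Substructure A) : Structure Sg where
  dom s := ↥(B.carrier s)
  dom_nonempty s := ⟨⟨(B.carrier_nonempty s).choose, (B.carrier_nonempty s).choose_spec⟩⟩
  interpFunc f args :=
    ⟨A.interpFunc f fun i => (args i).1, B.closed f _ fun i => (args i).2⟩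
  interpPred P args := A.interpPred P fun i => (args i).1

/-- View an assignment into a substructure as an assignment into the ambient structure. -/
def Substructure.amb {A : Structure Sg} (B : Substructure A)
    (ν : Assign B.toStructure) : Assign A := fun s n => (ν s n).1

/-- `B` is an elementary substructure of `A`. -/
def Substructure.IsElementary {A : Structure Sg} (B : Substructure A) : Prop :=
  ∀ (φ : Formula Sg) (ν : Assign B.toStructure),
    Sat B.toStructure ν φ ↔ Sat A (B.amb ν) φ

/-- Isomorphisms of structures. -/
structure Iso (A B : Structure Sg) : Type 1 where
  toEquiv : ∀ s, A.dom s ≃ B.dom s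
  map_func : ∀ (f : Sg.Func) args,
    toEquiv _ (A.interpFunc f args) = B.interpFunc f (fun i => toEquiv _ (args i))
  map_pred : ∀ (P : Sg.Pred) args,
    A.interpPred P args ↔ B.interpPred P (fun i => toEquiv _ (args i))

end MS

/-- The cardinality of a signature: sorts + function symbols + predicate symbols. -/
noncomputable def MSSignature.card (Sg : MSSignature) : Cardinal :=
  Cardinal.mk Sg.Sorts + Cardinal.mk Sg.Func + Cardinal.mk Sg.Pred

/-- A countable signature. -/
def MSSignature.IsCountable (Sg : MSSignature) : Prop :=
  Countable Sg.Sorts ∧ Countable Sg.Func ∧ Countable Sg.Pred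

open MS Cardinal

/-!
Encode `𝔸` as a one-sorted structure on the disjoint union of its sorts, with a unary predicate
for each sort. Many-sorted formulas translate into one-sorted formulas with relativized
quantifiers, so elementary equivalence of the encodings gives elementary equivalence of the
many-sorted structures; and "the sort predicates are nonempty and the functions respect sorts" is
first-order, so every structure elementarily equivalent to the encoding decodes again.

Adding `κ` pairwise distinct new constants to every infinite sort gives a theory that is finitely
satisfiable in the encoding itself, since an infinite set has room for finitely many distinct
witnesses. By compactness and Löwenheim–Skolem it has a model of cardinality `κ`, where every
infinite sort then has exactly `κ` elements. A finite sort keeps its size because "sort `s` has at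
least `n` elements" is a first-order sentence.
-/

open FirstOrder

theorem Set.exists_injOn_forall_mem_of_infinite {α β : Type*} (S : α → Set β)
    (hS : ∀ a, (S a).Infinite) (t : Finset α) :
    ∃ c : α → β, (∀ a, c a ∈ S a) ∧ Set.InjOn c t := by
  classical
  induction t using Finset.induction_on with
  | empty => exact ⟨fun a => (hS a).nonempty.some, fun a => (hS a).nonempty.some_mem, by simp⟩
  | insert a t ha ih =>
    obtain ⟨c, hcS, hc⟩ := ih
    obtain ⟨x, hxS, hx⟩ := ((hS a).sdiff (t.finite_toSet.image c)).nonempty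
    have hEq : Set.EqOn (Function.update c a x) c t := fun b hb =>
      Function.update_of_ne (ne_of_mem_of_not_mem hb ha) _ _
    refine ⟨Function.update c a x, fun b => ?_, ?_⟩
    · rcases eq_or_ne b a with rfl | hb
      · simpa using hxS
      · simpa [hb] using hcS b
    · rw [Finset.coe_insert, Set.injOn_insert (by simpa using ha), hEq.image_eq,
        Function.update_self]
      exact ⟨hc.congr hEq.symm, hx⟩

namespace FirstOrder.Language

open Structure

variable {L : Language} {M N : Type*} [L.Structure M] {α : Type*}

def Relations.extension (r : L.Relations 1) (M : Type*) [L.Structure M] : Set M :=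
  {x | RelMap r ![x]}

@[simp]
theorem Relations.mem_extension {r : L.Relations 1} {x : M} :
    x ∈ r.extension M ↔ RelMap r ![x] :=
  Iff.rfl

section Relativization

variable [DecidableEq α]

noncomputable def Formula.relAll (r : L.Relations 1) (a : α) (φ : L.Formula α) : L.Formula α :=
  Formula.iAlls Unit (((r.formula₁ (var a)).imp φ).relabel
    fun b => if b = a then .inr () else .inl b)

theorem Formula.realize_relAll {r : L.Relations 1} {a : α} {φ : L.Formula α} {v : α → M} :
    (φ.relAll r a).Realize v ↔ ∀ x ∈ r.extension M, φ.Realize (Function.update v a x) := by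
  have hv : ∀ i : Unit → M, Sum.elim v i ∘ (fun b => if b = a then .inr () else .inl b) =
      Function.update v a (i ()) := by
    intro i
    funext b
    by_cases hb : b = a <;> simp [hb]
  rw [relAll, Formula.realize_iAlls]
  refine ⟨fun h x hx => ?_, fun h i => ?_⟩
  · have hx' := h fun _ => x
    rw [Formula.realize_relabel, hv, Formula.realize_imp, Formula.realize_rel₁] at hx'
    exact hx' (by simpa using hx)
  · rw [Formula.realize_relabel, hv, Formula.realize_imp, Formula.realize_rel₁]
    exact fun hi => h _ (by simpa using hi)

noncomputable def Formula.relClosure (P : α → L.Relations 1) (φ : L.Formula α) : L.Sentence :=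
  Formula.iAlls φ.freeVarFinset <| Formula.relabel Sum.inr <|
    (Formula.iInf fun a : φ.freeVarFinset => (P a).formula₁ (var a)).imp (φ.restrictFreeVar id)

theorem Formula.realize_relClosure {P : α → L.Relations 1}
    (hP : ∀ a, ((P a).extension M).Nonempty) (φ : L.Formula α) :
    M ⊨ φ.relClosure P ↔ ∀ v : α → M, (∀ a, v a ∈ (P a).extension M) → φ.Realize v := by
  simp only [relClosure, Sentence.Realize, Formula.realize_iAlls, Formula.realize_relabel,
    Formula.realize_imp, Formula.realize_iInf, Formula.realize_rel₁, Term.realize_var,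
    Function.comp_def, Sum.elim_inr, ← Relations.mem_extension]
  refine ⟨fun h v hv => ?_, fun h xs hxs => ?_⟩
  · exact (BoundedFormula.realize_restrictFreeVar (f := id) (xs := default) v fun _ => rfl).1
      (h (v ∘ (↑)) fun a => hv a)
  · let v : α → M := fun a => if ha : a ∈ φ.freeVarFinset then xs ⟨a, ha⟩ else (hP a).some
    have hv : ∀ a, v a ∈ (P a).extension M := fun a => by
      by_cases ha : a ∈ φ.freeVarFinset
      · simpa [v, ha] using hxs ⟨a, ha⟩
      · simpa [v, ha] using (hP a).some_mem
    exact (BoundedFormula.realize_restrictFreeVar (f := id) (xs := default) v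
      fun a => by simp [v]).2 (h v hv)

end Relativization

section ElementarilyEquivalent

variable [L.Structure N]

noncomputable def Relations.cardGe (r : L.Relations 1) (n : ℕ) : L.Sentence :=
  Formula.iExs (Fin n) <| (Formula.iInf fun i => r.formula₁ (var (.inr i))) ⊓
    Formula.iInf fun p : {p : Fin n × Fin n // p.1 ≠ p.2} =>
      ((var (.inr p.1.1)).equal (var (.inr p.1.2))).not

theorem Relations.realize_cardGe (r : L.Relations 1) (n : ℕ) :
    M ⊨ r.cardGe n ↔ (n : Cardinal) ≤ #(r.extension M) := by
  simp only [cardGe, Sentence.Realize, Formula.realize_iExs, Formula.realize_inf,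
    Formula.realize_iInf, Formula.realize_rel₁, Formula.realize_not, Formula.realize_equal,
    Term.realize_var, Sum.elim_inr, ← Relations.mem_extension]
  rw [← Cardinal.lift_mk_fin, ← Cardinal.lift_uzero #(r.extension M), Cardinal.lift_mk_le']
  constructor
  · rintro ⟨x, hx, hinj⟩
    exact ⟨⟨fun i => ⟨x i, hx i⟩, fun i j hij =>
      by_contra fun hne => hinj ⟨(i, j), hne⟩ (congrArg Subtype.val hij)⟩⟩
  · rintro ⟨e⟩
    exact ⟨fun i => e i, fun i => (e i).2, fun p h => p.2 (e.injective (Subtype.ext h))⟩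

theorem ElementarilyEquivalent.natCast_le_card_extension_iff (h : M ≅[L] N) (r : L.Relations 1)
    (n : ℕ) : (n : Cardinal) ≤ #(r.extension M) ↔ (n : Cardinal) ≤ #(r.extension N) := by
  rw [← r.realize_cardGe, ← r.realize_cardGe]
  exact elementarilyEquivalent_iff.1 h _

theorem ElementarilyEquivalent.extension_nonempty (h : M ≅[L] N) {r : L.Relations 1}
    (hM : (r.extension M).Nonempty) : (r.extension N).Nonempty := by
  rw [← Set.nonempty_coe_sort, ← Cardinal.mk_ne_zero_iff, ← Cardinal.one_le_iff_ne_zero] at hM ⊢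
  exact_mod_cast (h.natCast_le_card_extension_iff r 1).1 (by exact_mod_cast hM)

theorem ElementarilyEquivalent.card_extension_eq_natCast (h : M ≅[L] N) (r : L.Relations 1)
    {n : ℕ} (hM : #(r.extension M) = n) : #(r.extension N) = n := by
  refine le_antisymm ?_ ((h.natCast_le_card_extension_iff r n).1 hM.ge)
  have hlt : ¬ ((n + 1 : ℕ) : Cardinal) ≤ #(r.extension N) := by
    rw [← h.natCast_le_card_extension_iff, hM, Nat.cast_le]
    omega
  rwa [not_le, Nat.cast_succ, ← Cardinal.succ_natCast, Order.lt_succ_iff] at hlt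

end ElementarilyEquivalent

section Witnesses

variable (L) {C : Type*}

noncomputable def witnessTheory (M : Type*) [L.Structure M] (Q : C → L.Relations 1) :
    L[[C]].Theory :=
  (L.lhomWithConstants C).onTheory (L.completeTheory M) ∪
    Formula.equivSentence '' Set.range (fun c => (Q c).formula₁ (var c)) ∪
    L.distinctConstantsTheory Set.univ

variable {L}

theorem isSatisfiable_witnessTheory [Nonempty M] {Q : C → L.Relations 1}
    (hQ : ∀ c, ((Q c).extension M).Infinite) : (L.witnessTheory M Q).IsSatisfiable := by
  rw [witnessTheory, distinctConstantsTheory_eq_iUnion, Set.union_iUnion,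
    Theory.isSatisfiable_directed_union_iff]
  · intro t
    obtain ⟨c, hcQ, hc⟩ := Set.exists_injOn_forall_mem_of_infinite _ hQ
      (t.map (Function.Embedding.subtype _))
    let := constantsOn.structure c
    refine @Theory.Model.isSatisfiable _ _ M _ _ (.union (.union ?_ ?_) ?_)
    · exact (LHom.onTheory_model _ _).2 inferInstance
    · rw [Theory.model_iff]
      rintro _ ⟨_, ⟨c', rfl⟩, rfl⟩
      rw [Formula.realize_equivSentence, Formula.realize_rel₁]
      exact hcQ c'
    · exact (L.model_distinctConstantsTheory _).2 hc
  · exact Monotone.directed_le (monotone_const.union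
      (monotone_distinctConstantsTheory.comp fun _ _ h => Finset.map_subset_map.2 h))

variable {Q : C → L.Relations 1} [L[[C]].Structure N]

theorem injective_con_of_model_witnessTheory (h : N ⊨ L.witnessTheory M Q) :
    Function.Injective fun c : C => (L.con c : N) :=
  Set.injOn_univ.1 <| (L.model_distinctConstantsTheory _).1 <| h.mono Set.subset_union_right

variable [L.Structure N] [(L.lhomWithConstants C).IsExpansionOn N]

theorem con_mem_extension_of_model_witnessTheory (h : N ⊨ L.witnessTheory M Q) (c : C) :
    (L.con c : N) ∈ (Q c).extension N := by
  have hc : N ⊨ Formula.equivSentence ((Q c).formula₁ (var c)) :=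
    h.realize_of_mem _ (.inl (.inr ⟨_, ⟨c, rfl⟩, rfl⟩))
  rwa [Formula.realize_equivSentence, Formula.realize_rel₁] at hc

theorem elementarilyEquivalent_of_model_witnessTheory (h : N ⊨ L.witnessTheory M Q) :
    M ≅[L] N := by
  have : N ⊨ L.completeTheory M :=
    (LHom.onTheory_model _ _).1 <| h.mono (Set.subset_union_left.trans Set.subset_union_left)
  exact elementarilyEquivalent_iff.2 fun φ => (realize_iff_of_model_completeTheory M N φ).symm

end Witnesses

universe u in
theorem exists_elementarilyEquivalent_card_extension_eq {L : Language.{u, u}} {M : Type u}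
    [L.Structure M] {ι : Type u} (P : ι → L.Relations 1) (hP : ∀ i, ((P i).extension M).Infinite)
    {κ : Cardinal.{u}} (hκ : ℵ₀ ≤ κ) (hL : L.card ≤ κ) (hι : #ι ≤ κ) :
    ∃ (N : Type u) (_ : L.Structure N), (M ≅[L] N) ∧ ∀ i, #((P i).extension N) = κ := by
  rcases isEmpty_or_nonempty ι with hι | ⟨⟨i₀⟩⟩
  · exact ⟨M, inferInstance, rfl, isEmptyElim⟩
  have : Nonempty M := ⟨(hP i₀).nonempty.some⟩
  have : Nonempty ι := ⟨i₀⟩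
  have : Infinite κ.out := Cardinal.infinite_iff.2 (by rwa [Cardinal.mk_out])
  obtain ⟨N₀⟩ := isSatisfiable_witnessTheory (M := M) (Q := fun c : ι × κ.out => P c.1)
    fun c => hP c.1
  obtain ⟨N, hN⟩ := Theory.exists_model_card_eq
    ⟨N₀, Infinite.of_injective _ (injective_con_of_model_witnessTheory N₀.is_model)⟩ κ hκ (by
      simp only [card_withConstants, lift_id, mk_prod, mk_out]
      exact add_le_of_le hκ hL ((mul_le_max _ _).trans (by simp [hι, hκ])))
  let := (L.lhomWithConstants (ι × κ.out)).reduct N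
  refine ⟨N, this, elementarilyEquivalent_of_model_witnessTheory N.is_model,
    fun i => le_antisymm ((mk_set_le _).trans hN.le) ?_⟩
  let f (j : κ.out) : (P i).extension N :=
    ⟨L.con (i, j), con_mem_extension_of_model_witnessTheory N.is_model (i, j)⟩
  have hf : Function.Injective f := fun j j' h =>
    (Prod.mk.inj (injective_con_of_model_witnessTheory N.is_model (congrArg Subtype.val h))).2
  exact (mk_out κ).symm.trans_le (mk_le_of_injective hf)

end FirstOrder.Language

-- The sort predicates are indexed as the fiber `1 = n` so that `card_language` is an equivalence.
def MSSignature.language (Sg : MSSignature) : Language where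
  Functions n := {f : Sg.Func // (Sg.funcDom f).length = n}
  Relations n := {P : Sg.Pred // (Sg.predDom P).length = n} ⊕ {_s : Sg.Sorts // 1 = n}

theorem MSSignature.card_language (Sg : MSSignature) : Sg.language.card = Sg.card := by
  have e : Sg.language.Symbols ≃ Sg.Func ⊕ (Sg.Pred ⊕ Sg.Sorts) :=
    (Equiv.sigmaFiberEquiv _).sumCongr <| (Equiv.sigmaSumDistrib _ _).trans <|
      (Equiv.sigmaFiberEquiv _).sumCongr (Equiv.sigmaFiberEquiv _)
  rw [Language.card, mk_congr e, mk_sum, mk_sum, MSSignature.card]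
  simp only [lift_id]
  ac_rfl

namespace MS

open FirstOrder.Language hiding Formula Term Structure
open FirstOrder.Language.Structure

variable {Sg : MSSignature}

def funcSym (f : Sg.Func) : Sg.language.Functions (Sg.funcDom f).length := ⟨f, rfl⟩

def predSym (P : Sg.Pred) : Sg.language.Relations (Sg.predDom P).length := .inl ⟨P, rfl⟩

def sortRel (s : Sg.Sorts) : Sg.language.Relations 1 := .inr ⟨s, rfl⟩

variable (Sg) in
structure IsSorted (N : Type*) [Sg.language.Structure N] : Prop where
  nonempty : ∀ s : Sg.Sorts, ((sortRel s).extension N).Nonempty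
  funMap_mem : ∀ (f : Sg.Func) (x : Fin (Sg.funcDom f).length → N),
    (∀ i, x i ∈ (sortRel ((Sg.funcDom f).get i)).extension N) →
    funMap (funcSym f) x ∈ (sortRel (Sg.funcCod f)).extension N

def IsSorted.toStructure {N : Type} [Sg.language.Structure N] (h : IsSorted Sg N) :
    Structure Sg where
  dom s := (sortRel s).extension N
  dom_nonempty s := (h.nonempty s).to_subtype
  interpFunc f x := ⟨funMap (funcSym f) fun i => x i, h.funMap_mem f _ fun i => (x i).2⟩
  interpPred P x := RelMap (predSym P) fun i => (x i : N)

/-- `C` is isomorphic to the many-sorted structure that the sort predicates carve out of `N`. -/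
structure SortedRep (C : Structure Sg) (N : Type*) [Sg.language.Structure N] where
  equiv : ∀ s, C.dom s ≃ (sortRel s).extension N
  map_func : ∀ f args,
    (equiv _ (C.interpFunc f args) : N) = funMap (funcSym f) fun i => (equiv _ (args i) : N)
  map_pred : ∀ P args,
    C.interpPred P args ↔ RelMap (predSym P) fun i => (equiv _ (args i) : N)

def IsSorted.sortedRep {N : Type} [Sg.language.Structure N] (h : IsSorted Sg N) :
    SortedRep h.toStructure N where
  equiv _ := Equiv.refl _
  map_func _ _ := rfl
  map_pred _ _ := Iff.rfl

abbrev Var (Sg : MSSignature) : Type := Sg.Sorts × ℕ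

noncomputable instance : DecidableEq (Var Sg) := Classical.decEq _

def Term.toOneSorted : ∀ {s : Sg.Sorts}, Term Sg s → Sg.language.Term (Var Sg)
  | _, .var s n => .var ⟨s, n⟩
  | _, .app f args => .func (funcSym f) fun i => (args i).toOneSorted

noncomputable def Formula.toOneSorted : Formula Sg → Sg.language.Formula (Var Sg)
  | .eq t u => t.toOneSorted.equal u.toOneSorted
  | .pred P args => (predSym P).formula fun i => (args i).toOneSorted
  | .falsum => ⊥
  | .imp φ ψ => φ.toOneSorted.imp ψ.toOneSorted
  | .all s n φ => φ.toOneSorted.relAll (sortRel s) ⟨s, n⟩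

section SortedRep

variable {C : Structure Sg} {N : Type*} [Sg.language.Structure N] (R : SortedRep C N)

def SortedRep.assign (ν : Assign C) : Var Sg → N := fun v => R.equiv v.1 (ν v.1 v.2)

theorem SortedRep.realize_toOneSorted_term (ν : Assign C) :
    ∀ {s : Sg.Sorts} (t : Term Sg s), t.toOneSorted.realize (R.assign ν) = R.equiv s (t.eval ν)
  | _, .var s n => rfl
  | _, .app f args => by
    simp only [Term.toOneSorted, Term.eval, Term.realize_func, R.map_func,
      SortedRep.realize_toOneSorted_term ν]

theorem SortedRep.assign_update (ν : Assign C) (s : Sg.Sorts) (n : ℕ) (a : C.dom s) :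
    R.assign (ν.update s n a) = Function.update (R.assign ν) ⟨s, n⟩ (R.equiv s a) := by
  funext ⟨t, m⟩
  by_cases h : (t, m) = (s, n)
  · obtain ⟨rfl, rfl⟩ := Prod.mk.inj h
    simp [SortedRep.assign, Assign.update]
  · have hν : ν.update s n a t m = ν t m := by
      unfold Assign.update
      split_ifs with hs hm
      · subst hs hm
        exact absurd rfl h
      all_goals rfl
    rw [Function.update_of_ne h, SortedRep.assign, SortedRep.assign, hν]

theorem SortedRep.realize_toOneSorted (φ : Formula Sg) (ν : Assign C) :
    φ.toOneSorted.Realize (R.assign ν) ↔ Sat C ν φ := by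
  induction φ generalizing ν with
  | eq t u => simp [Formula.toOneSorted, Sat, R.realize_toOneSorted_term, Subtype.val_inj]
  | pred P args => simp [Formula.toOneSorted, Sat, R.realize_toOneSorted_term, R.map_pred]
  | falsum => simp [Formula.toOneSorted, Sat]
  | imp φ ψ ihφ ihψ => simp [Formula.toOneSorted, Sat, ihφ, ihψ]
  | all s n φ ih =>
    rw [Formula.toOneSorted, Formula.realize_relAll, Sat]
    refine ⟨fun h a => ?_, fun h x hx => ?_⟩
    · rw [← ih, R.assign_update]
      exact h _ (R.equiv s a).2
    · obtain ⟨a, rfl⟩ : ∃ a, (R.equiv s a : N) = x := ⟨(R.equiv s).symm ⟨x, hx⟩, by simp⟩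
      rw [← R.assign_update, ih]
      exact h a

end SortedRep

noncomputable def Formula.sortedClosure (φ : Formula Sg) : Sg.language.Sentence :=
  φ.toOneSorted.relClosure fun v => sortRel v.1

theorem SortedRep.realize_sortedClosure {C : Structure Sg} {N : Type*} [Sg.language.Structure N]
    (R : SortedRep C N) (φ : Formula Sg) : N ⊨ φ.sortedClosure ↔ ∀ ν, Sat C ν φ := by
  have hN (v : Var Sg) : ((sortRel v.1).extension N).Nonempty :=
    ⟨_, (R.equiv v.1 (C.dom_nonempty v.1).some).2⟩
  rw [Formula.sortedClosure, Formula.realize_relClosure hN]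
  refine ⟨fun h ν => (R.realize_toOneSorted φ ν).1 (h _ fun v => (R.equiv _ _).2),
    fun h v hv => ?_⟩
  let ν : Assign C := fun s n => (R.equiv s).symm ⟨v (s, n), hv (s, n)⟩
  have hν : R.assign ν = v := funext fun _ => by simp [SortedRep.assign, ν]
  exact hν ▸ (R.realize_toOneSorted φ ν).2 (h ν)

theorem SortedRep.elemEquiv {A B : Structure Sg} {M N : Type*} [Sg.language.Structure M]
    [Sg.language.Structure N] (RA : SortedRep A M) (RB : SortedRep B N)
    (h : M ≅[Sg.language] N) : ElemEquiv A B := fun φ _ => by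
  rw [← RA.realize_sortedClosure, ← RB.realize_sortedClosure]
  exact elementarilyEquivalent_iff.1 h _

noncomputable def funcSortedSentence (f : Sg.Func) : Sg.language.Sentence :=
  ((sortRel (Sg.funcCod f)).formula₁ (.func (funcSym f) fun i => .var i)).relClosure
    fun i => sortRel ((Sg.funcDom f).get i)

theorem realize_funcSortedSentence {N : Type*} [Sg.language.Structure N]
    (hN : ∀ s : Sg.Sorts, ((sortRel s).extension N).Nonempty) (f : Sg.Func) :
    N ⊨ funcSortedSentence f ↔ ∀ x : Fin (Sg.funcDom f).length → N,
      (∀ i, x i ∈ (sortRel ((Sg.funcDom f).get i)).extension N) →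
      funMap (funcSym f) x ∈ (sortRel (Sg.funcCod f)).extension N := by
  rw [funcSortedSentence, Formula.realize_relClosure fun _ => hN _]
  simp

theorem IsSorted.of_elementarilyEquivalent {M N : Type*} [Sg.language.Structure M]
    [Sg.language.Structure N] (hM : IsSorted Sg M) (h : M ≅[Sg.language] N) : IsSorted Sg N := by
  have hN s : ((sortRel s).extension N).Nonempty := h.extension_nonempty (hM.nonempty s)
  refine ⟨hN, fun f => (realize_funcSortedSentence hN f).1 ?_⟩
  exact (elementarilyEquivalent_iff.1 h _).1
    ((realize_funcSortedSentence hM.nonempty f).2 (hM.funMap_mem f))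

namespace Structure

variable (A : Structure Sg)

abbrev Total : Type := (s : Sg.Sorts) × A.dom s

variable {A} in
open Classical in
noncomputable def Total.proj (s : Sg.Sorts) (x : A.Total) : A.dom s :=
  if h : x.1 = s then h ▸ x.2 else Classical.choice (A.dom_nonempty s)

@[simp]
theorem Total.proj_mk (s : Sg.Sorts) (a : A.dom s) : Total.proj s (⟨s, a⟩ : A.Total) = a :=
  dif_pos rfl

-- Arguments of the wrong sort are read through `Total.proj` as arbitrary elements; only
-- well-sorted tuples are ever evaluated.
noncomputable instance : Sg.language.Structure A.Total where
  funMap {n} f x := match n, f, x with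
    | _, ⟨f, rfl⟩, x => ⟨Sg.funcCod f, A.interpFunc f fun i => Total.proj _ (x i)⟩
  RelMap {n} r x := match n, r, x with
    | _, .inl ⟨P, rfl⟩, x => A.interpPred P fun i => Total.proj _ (x i)
    | _, .inr ⟨s, rfl⟩, x => (x 0).1 = s

theorem isSorted_total : IsSorted Sg A.Total where
  nonempty s := ⟨⟨s, Classical.choice (A.dom_nonempty s)⟩, rfl⟩
  funMap_mem _ _ _ := rfl

noncomputable def sortedRepTotal : SortedRep A A.Total where
  equiv s := (Equiv.sigmaSubtype s).symm.trans (Equiv.subtypeEquivRight fun _ => Iff.rfl)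
  map_func f args := by
    change (⟨_, A.interpFunc f args⟩ : A.Total) =
      ⟨_, A.interpFunc f fun i => Total.proj _ ⟨_, args i⟩⟩
    simp only [Total.proj_mk]
  map_pred P args := by
    change _ ↔ A.interpPred P fun i => Total.proj _ ⟨_, args i⟩
    simp only [Total.proj_mk]

end Structure

end MS

/-- Combined Löwenheim–Skolem for many-sorted logic: for any `κ ≥ max(|Σ|, ℵ₀)` there
is a structure `𝔹` elementarily equivalent to `𝔸` with `|σ^𝔹| = κ` on every sort
interpreted as infinite in `𝔸`, and `|σ^𝔹| = |σ^𝔸|` on every sort interpreted as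
finite in `𝔸`. -/
theorem many_sorted_combined_LS {Sg : MSSignature} (A : Structure Sg) (κ : Cardinal)
    (hsig : max Sg.card ℵ₀ ≤ κ) :
    ∃ B : Structure Sg, ElemEquiv A B ∧
      (∀ s : Sg.Sorts, Infinite (A.dom s) → #(B.dom s) = κ) ∧
      (∀ s : Sg.Sorts, Finite (A.dom s) → #(B.dom s) = #(A.dom s)) := by
  have hSg : Sg.card ≤ κ := le_of_max_le_left hsig
  have hSorts : #Sg.Sorts ≤ κ :=
    (self_le_add_right _ _).trans ((self_le_add_right _ _).trans hSg)
  let RA := A.sortedRepTotal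
  obtain ⟨N, _, hAN, hcard⟩ := Language.exists_elementarilyEquivalent_card_extension_eq
    (fun s : {s // Infinite (A.dom s)} => sortRel s.1)
    (fun s => Set.infinite_coe_iff.1 ((RA.equiv s).infinite_iff.1 s.2))
    (le_of_max_le_right hsig) (Sg.card_language ▸ hSg) ((mk_subtype_le _).trans hSorts)
  have hN : IsSorted Sg N := A.isSorted_total.of_elementarilyEquivalent hAN
  refine ⟨hN.toStructure, RA.elemEquiv hN.sortedRep hAN, fun s hs => hcard ⟨s, hs⟩,
    fun s _ => ?_⟩
  have hA : #((sortRel s).extension A.Total) = Nat.card (A.dom s) := by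
    rw [Nat.cast_card, mk_congr (RA.equiv s)]
  exact (hAN.card_extension_eq_natCast _ hA).trans Nat.cast_card
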